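/- arXiv:2109.13365 — 8 statements merged into one kernel-verified Lean document; each statement's English description precedes it below -/
import Mathlib

section
/- Fix a positive integer n. If p is a polynomial with complex coefficients such that for every entrywise nonnegative n-by-n real matrix A (viewed as a complex matrix), every entry of p(A) is a nonnegative real number, then every coefficient of p is real. -/
open Polynomial Matrix

theorem stmt3 (n : ℕ) (hn : 0 < n) (p : Polynomial ℂ)
    (h : ∀ A : Matrix (Fin n) (Fin n) ℝ, (∀ i j, 0 ≤ A i j) →
      ∀ i j, ((Polynomial.aeval (A.map (fun x : ℝ => (x : ℂ))) p) i j).im = 0 ∧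
        0 ≤ ((Polynomial.aeval (A.map (fun x : ℝ => (x : ℂ))) p) i j).re) :
    ∀ k, (p.coeff k).im = 0 := by
  -- evaluate at scalar matrices m • I for m : ℕ
  have key : ∀ m : ℕ, (p.eval ((m : ℂ))).im = 0 := by
    intro m
    set A : Matrix (Fin n) (Fin n) ℝ := Matrix.diagonal (fun _ => (m : ℝ)) with hA
    have hnn : ∀ i j, 0 ≤ A i j := by
      intro i j
      by_cases hij : i = j <;> simp [hA, Matrix.diagonal, hij]
    have hmap : A.map (fun x : ℝ => (x : ℂ)) = Matrix.diagonal (fun _ => (m : ℂ)) := by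
      ext i j
      by_cases hij : i = j <;> simp [hA, Matrix.diagonal, hij]
    have h1 : Matrix.diagonal (fun _ : Fin n => (m : ℂ)) =
        algebraMap ℂ (Matrix (Fin n) (Fin n) ℂ) (m : ℂ) := by
      ext i j
      simp [Matrix.algebraMap_matrix_apply, Matrix.diagonal]
    have heval : Polynomial.aeval (A.map (fun x : ℝ => (x : ℂ))) p =
        Matrix.diagonal (fun _ => p.eval (m : ℂ)) := by
      rw [hmap, h1, aeval_algebraMap_apply]
      ext i j
      simp only [Matrix.algebraMap_matrix_apply, Matrix.diagonal_apply, Polynomial.coe_aeval_eq_eval]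
      split <;> simp
    have := (h A hnn ⟨0, hn⟩ ⟨0, hn⟩).1
    rw [heval] at this
    simpa [Matrix.diagonal] using this
  -- consider q = p - conj p
  set q : Polynomial ℂ := p - p.map (starRingEnd ℂ) with hq
  have hroot : ∀ m : ℕ, q.IsRoot (m : ℂ) := by
    intro m
    have hc : ((m : ℂ)) = (starRingEnd ℂ) (m : ℂ) := by simp
    have h2 : (p.map (starRingEnd ℂ)).eval ((m : ℂ)) = (starRingEnd ℂ) (p.eval (m : ℂ)) := by
      rw [eval_map]
      conv_lhs => rw [hc]
      rw [eval₂_hom]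
    have h3 : (starRingEnd ℂ) (p.eval (m : ℂ)) = p.eval (m : ℂ) := by
      apply Complex.conj_eq_iff_im.2 (key m)
    simp [Polynomial.IsRoot, hq, h2, h3]
  have hq0 : q = 0 := by
    apply Polynomial.eq_zero_of_infinite_isRoot
    exact Set.infinite_of_injective_forall_mem (f := fun m : ℕ => (m : ℂ))
      Nat.cast_injective hroot
  intro k
  have : q.coeff k = 0 := by rw [hq0]; simp
  have hck : p.coeff k = (starRingEnd ℂ) (p.coeff k) := by
    have := this
    rw [hq, Polynomial.coeff_sub, Polynomial.coeff_map, sub_eq_zero] at this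
    exact this
  exact Complex.conj_eq_iff_im.1 hck.symm
end

section
/- Let p be a polynomial with real coefficients. Then p ∈ 𝒫₂ if and only if both of the following hold: (i) p(ρ) ≥ |p(μ)| for all real ρ, μ with ρ ≥ |μ|; and (ii) ρ·p(−μ) + μ·p(ρ) ≥ 0 for all real ρ, μ with 0 < μ ≤ ρ. -/
open Polynomial Matrix

/-!
A nonnegative `2 × 2` matrix `A` has real eigenvalues `y ≤ x` with `|y| ≤ x` (its trace is
nonnegative), and both diagonal entries lie in `[y, x]`. When `y < x`, Cayley–Hamilton makes
`p(A)` the linear interpolant of `p` at `x, y` evaluated at `A`: its off-diagonal entries are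
`(p x - p y)/(x - y) · aᵢⱼ`, nonnegative by (i), and its diagonal entries are convex
combinations of `p x` and `p y`, nonnegative by (i) when `y ≥ 0` and, since `aᵢᵢ ≥ 0`, by (ii)
when `y < 0`. Coincident eigenvalues are reached as limits of `A + ε !![0, 1; 1, 0]`.
Conversely, (i) and (ii) are read off from `ρ • 1`, from the symmetric matrix with eigenvalues
`ρ, μ`, and from the companion matrix with eigenvalues `ρ, -μ`.
-/

theorem Polynomial.aeval_eq_linear_interpolation {K A : Type*} [Field K] [Ring A] [Algebra K A]
    (p : K[X]) {a : A} {x y : K} (hxy : x ≠ y) (ha : aeval a ((X - C x) * (X - C y)) = 0) :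
    aeval a p = ((p.eval x - p.eval y) / (x - y)) • a +
      ((x * p.eval y - y * p.eval x) / (x - y)) • (1 : A) := by
  set r : K[X] :=
    C ((p.eval x - p.eval y) / (x - y)) * X + C ((x * p.eval y - y * p.eval x) / (x - y))
  have hroot_x : (p - r).IsRoot x := by
    simp only [r, IsRoot, eval_sub, eval_add, eval_mul, eval_C, eval_X]
    field_simp
    ring
  have hroot_y : (p - r).IsRoot y := by
    simp only [r, IsRoot, eval_sub, eval_add, eval_mul, eval_C, eval_X]
    field_simp
    ring
  obtain ⟨q, hq⟩ : (X - C x) * (X - C y) ∣ p - r :=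
    (isCoprime_X_sub_C_of_isUnit_sub (sub_ne_zero.mpr hxy).isUnit).mul_dvd
      (dvd_iff_isRoot.mpr hroot_x) (dvd_iff_isRoot.mpr hroot_y)
  have hr : aeval a r = ((p.eval x - p.eval y) / (x - y)) • a +
      ((x * p.eval y - y * p.eval x) / (x - y)) • (1 : A) := by
    simp only [r, map_add, map_mul, aeval_C, aeval_X, Algebra.algebraMap_eq_smul_one,
      smul_mul_assoc, one_mul]
  rw [← hr, ← sub_eq_zero, ← map_sub, hq, map_mul, ha, zero_mul]

theorem Matrix.aeval_fin_two_eq_linear_interpolation {K : Type*} [Field K] (p : K[X])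
    (M : Matrix (Fin 2) (Fin 2) K) {x y : K} (hxy : x ≠ y) (htr : M.trace = x + y)
    (hdet : M.det = x * y) :
    aeval M p = ((p.eval x - p.eval y) / (x - y)) • M +
      ((x * p.eval y - y * p.eval x) / (x - y)) • (1 : Matrix (Fin 2) (Fin 2) K) := by
  refine p.aeval_eq_linear_interpolation hxy ?_
  have hchar : (X - C x) * (X - C y) = M.charpoly := by
    rw [charpoly_fin_two, htr, hdet, C_add, C_mul]
    ring
  rw [hchar, aeval_self_charpoly]

theorem Matrix.aeval_fin_two_apply_self {K : Type*} [Field K] (p : K[X])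
    (M : Matrix (Fin 2) (Fin 2) K) {x y : K} (hxy : x ≠ y) (htr : M.trace = x + y)
    (hdet : M.det = x * y) (i : Fin 2) :
    aeval M p i i = (p.eval x * (M i i - y) + p.eval y * (x - M i i)) / (x - y) := by
  rw [M.aeval_fin_two_eq_linear_interpolation p hxy htr hdet]
  simp only [add_apply, smul_apply, one_apply_eq, smul_eq_mul]
  field_simp [sub_ne_zero.mpr hxy]
  ring

theorem Matrix.aeval_fin_two_apply_of_ne {K : Type*} [Field K] (p : K[X])
    (M : Matrix (Fin 2) (Fin 2) K) {x y : K} (hxy : x ≠ y) (htr : M.trace = x + y)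
    (hdet : M.det = x * y) {i j : Fin 2} (hij : i ≠ j) :
    aeval M p i j = (p.eval x - p.eval y) / (x - y) * M i j := by
  rw [M.aeval_fin_two_eq_linear_interpolation p hxy htr hdet]
  simp [one_apply_ne hij]

theorem Matrix.exists_eigenvalues_fin_two_of_nonneg {M : Matrix (Fin 2) (Fin 2) ℝ}
    (hM : ∀ i j, 0 ≤ M i j) (hdisc : 0 < M.discr) :
    ∃ x y : ℝ, y < x ∧ |y| ≤ x ∧ M.trace = x + y ∧ M.det = x * y ∧
      ∀ i, y ≤ M i i ∧ M i i ≤ x := by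
  set s := √M.discr
  have hs : 0 < s := Real.sqrt_pos.mpr hdisc
  have hs_sq : s ^ 2 = M.discr := Real.sq_sqrt hdisc.le
  rw [discr_fin_two, trace_fin_two, det_fin_two] at hs_sq
  rw [trace_fin_two, det_fin_two]
  have hdiag : |M 0 0 - M 1 1| ≤ s :=
    abs_le_of_sq_le_sq (by nlinarith [mul_nonneg (hM 0 1) (hM 1 0)]) hs.le
  obtain ⟨hdiag₁, hdiag₂⟩ := abs_le.mp hdiag
  have htr : 0 ≤ M 0 0 + M 1 1 := add_nonneg (hM 0 0) (hM 1 1)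
  refine ⟨(M 0 0 + M 1 1 + s) / 2, (M 0 0 + M 1 1 - s) / 2, by linarith,
    abs_le.mpr ⟨by linarith, by linarith⟩, by ring, by linear_combination hs_sq / 4, ?_⟩
  simp only [Fin.forall_fin_two]
  constructor <;> constructor <;> linarith

theorem Matrix.discr_add_smul_swap_pos {M : Matrix (Fin 2) (Fin 2) ℝ} (hM : ∀ i j, 0 ≤ M i j)
    {ε : ℝ} (hε : 0 < ε) : 0 < (M + ε • !![0, 1; 1, 0]).discr := by
  have hoff : 0 < (M 0 1 + ε) * (M 1 0 + ε) :=
    mul_pos (add_pos_of_nonneg_of_pos (hM 0 1) hε) (add_pos_of_nonneg_of_pos (hM 1 0) hε)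
  simp only [discr_fin_two, trace_fin_two, det_fin_two, add_apply, smul_apply, of_apply,
    cons_val', cons_val_zero, cons_val_one, empty_val', cons_val_fin_one, smul_eq_mul]
  nlinarith [sq_nonneg (M 0 0 - M 1 1)]

theorem eval_mul_sub_add_eval_mul_sub_nonneg {p : ℝ[X]}
    (h₁ : ∀ ρ μ : ℝ, |μ| ≤ ρ → |p.eval μ| ≤ p.eval ρ)
    (h₂ : ∀ ρ μ : ℝ, 0 < μ → μ ≤ ρ → 0 ≤ ρ * p.eval (-μ) + μ * p.eval ρ)
    {x y t : ℝ} (hyx : |y| ≤ x) (ht : 0 ≤ t) (hyt : y ≤ t) (htx : t ≤ x) :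
    0 ≤ p.eval x * (t - y) + p.eval y * (x - t) := by
  have hx : 0 ≤ p.eval x := (abs_nonneg _).trans (h₁ x y hyx)
  rcases le_or_gt 0 y with hy | hy
  · have : 0 ≤ p.eval y := (abs_nonneg _).trans (h₁ y y (abs_of_nonneg hy).le)
    positivity
  · have h₀ : 0 ≤ x * p.eval y + -y * p.eval x := by
      simpa using h₂ x (-y) (by linarith) ((neg_le_abs y).trans hyx)
    have hx_pos : 0 < x := by linarith [neg_le_of_abs_le hyx]
    refine nonneg_of_mul_nonneg_right ?_ hx_pos
    have := add_nonneg (mul_nonneg (sub_nonneg.mpr htx) h₀)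
      (mul_nonneg ht (mul_nonneg hx (sub_nonneg.mpr (hyt.trans htx))))
    linear_combination this

/-- `p ∈ 𝒫ₙ`. -/
def PreservesNonnegMatrices (n : ℕ) (p : ℝ[X]) : Prop :=
  ∀ A : Matrix (Fin n) (Fin n) ℝ, (∀ i j, 0 ≤ A i j) → ∀ i j, 0 ≤ aeval A p i j

theorem aeval_nonneg_of_discr_pos {p : ℝ[X]}
    (h₁ : ∀ ρ μ : ℝ, |μ| ≤ ρ → |p.eval μ| ≤ p.eval ρ)
    (h₂ : ∀ ρ μ : ℝ, 0 < μ → μ ≤ ρ → 0 ≤ ρ * p.eval (-μ) + μ * p.eval ρ)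
    {M : Matrix (Fin 2) (Fin 2) ℝ} (hM : ∀ i j, 0 ≤ M i j) (hdisc : 0 < M.discr) (i j : Fin 2) :
    0 ≤ aeval M p i j := by
  obtain ⟨x, y, hyx, habs, htr, hdet, hdiag⟩ := exists_eigenvalues_fin_two_of_nonneg hM hdisc
  have hsub : 0 < x - y := sub_pos.mpr hyx
  rcases eq_or_ne i j with rfl | hij
  · rw [M.aeval_fin_two_apply_self p hyx.ne' htr hdet]
    exact div_nonneg (eval_mul_sub_add_eval_mul_sub_nonneg h₁ h₂ habs (hM i i) (hdiag i).1
      (hdiag i).2) hsub.le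
  · rw [M.aeval_fin_two_apply_of_ne p hyx.ne' htr hdet hij]
    have hmono : p.eval y ≤ p.eval x := (le_abs_self _).trans (h₁ x y habs)
    exact mul_nonneg (div_nonneg (sub_nonneg.mpr hmono) hsub.le) (hM i j)

theorem preservesNonnegMatrices_two_of_abs_eval_le {p : ℝ[X]}
    (h₁ : ∀ ρ μ : ℝ, |μ| ≤ ρ → |p.eval μ| ≤ p.eval ρ)
    (h₂ : ∀ ρ μ : ℝ, 0 < μ → μ ≤ ρ → 0 ≤ ρ * p.eval (-μ) + μ * p.eval ρ) :
    PreservesNonnegMatrices 2 p := by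
  intro M hM i j
  set J : Matrix (Fin 2) (Fin 2) ℝ := !![0, 1; 1, 0]
  have hJ : ∀ i j, 0 ≤ J i j := by simp [J, Fin.forall_fin_two]
  -- Perturbing makes the eigenvalues distinct; conclude by continuity as `ε → 0⁺`.
  have hpert : ∀ ε ∈ Set.Ioi (0 : ℝ), 0 ≤ aeval (M + ε • J) p i j := fun ε hε =>
    aeval_nonneg_of_discr_pos h₁ h₂ (fun k l => add_nonneg (hM k l) (mul_nonneg hε.le (hJ k l)))
      (M.discr_add_smul_swap_pos hM hε) i j
  have hcont : Continuous fun ε : ℝ => aeval (M + ε • J) p i j := by fun_prop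
  have hlim := (hcont.tendsto 0).mono_left (nhdsWithin_le_nhds (s := Set.Ioi 0))
  rw [zero_smul, add_zero] at hlim
  exact ge_of_tendsto hlim (eventually_nhdsWithin_of_forall hpert)

theorem PreservesNonnegMatrices.eval_nonneg {p : ℝ[X]} {n : ℕ} [NeZero n]
    (hp : PreservesNonnegMatrices n p) {ρ : ℝ} (hρ : 0 ≤ ρ) : 0 ≤ p.eval ρ := by
  have := hp (algebraMap ℝ _ ρ) (fun i j => by
    rw [algebraMap_matrix_apply]; split_ifs <;> simp [hρ]) 0 0
  rwa [aeval_algebraMap_apply_eq_algebraMap_eval, algebraMap_matrix_apply, if_pos rfl] at this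

theorem PreservesNonnegMatrices.abs_eval_le {p : ℝ[X]} (hp : PreservesNonnegMatrices 2 p)
    {ρ μ : ℝ} (hμρ : |μ| ≤ ρ) : |p.eval μ| ≤ p.eval ρ := by
  obtain ⟨hμ₁, hμ₂⟩ := abs_le.mp hμρ
  rcases hμ₂.lt_or_eq with hlt | rfl
  · set S : Matrix (Fin 2) (Fin 2) ℝ := !![(ρ + μ) / 2, (ρ - μ) / 2; (ρ - μ) / 2, (ρ + μ) / 2]
    have hsub : 0 < ρ - μ := sub_pos.mpr hlt
    have hS : ∀ i j, 0 ≤ S i j := by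
      have hsum : 0 ≤ (ρ + μ) / 2 := by linarith
      have hdiff : 0 ≤ (ρ - μ) / 2 := by linarith
      simp only [Fin.forall_fin_two]
      simpa [S] using ⟨⟨hsum, hdiff⟩, hdiff, hsum⟩
    have htr : S.trace = ρ + μ := by simp only [S, trace_fin_two_of]; ring
    have hdet : S.det = ρ * μ := by simp only [S, det_fin_two_of]; ring
    have hdiag := hp S hS 0 0
    have hoff := hp S hS 0 1
    rw [S.aeval_fin_two_apply_self p hlt.ne' htr hdet, le_div_iff₀ hsub] at hdiag
    rw [S.aeval_fin_two_apply_of_ne p hlt.ne' htr hdet zero_ne_one] at hoff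
    have hmono := (le_div_iff₀ hsub).mp (nonneg_of_mul_nonneg_left hoff (by simpa [S] using hsub))
    simp only [S, of_apply, cons_val', cons_val_zero, empty_val', cons_val_fin_one] at hdiag
    rw [abs_le]
    constructor <;> nlinarith
  · exact (abs_of_nonneg (hp.eval_nonneg ((abs_nonneg μ).trans hμρ))).le

theorem PreservesNonnegMatrices.mul_eval_neg_add_mul_eval_nonneg {p : ℝ[X]}
    (hp : PreservesNonnegMatrices 2 p) {ρ μ : ℝ} (hμ : 0 < μ) (hμρ : μ ≤ ρ) :
    0 ≤ ρ * p.eval (-μ) + μ * p.eval ρ := by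
  set B : Matrix (Fin 2) (Fin 2) ℝ := !![ρ - μ, ρ * μ; 1, 0]
  have hB : ∀ i j, 0 ≤ B i j := by
    simp only [Fin.forall_fin_two]
    simpa [B] using ⟨hμρ, mul_nonneg (hμ.le.trans hμρ) hμ.le⟩
  have htr : B.trace = ρ + -μ := by simp only [B, trace_fin_two_of]; ring
  have hdet : B.det = ρ * -μ := by simp only [B, det_fin_two_of]; ring
  have hlt : -μ < ρ := by linarith
  have h := hp B hB 1 1
  rw [B.aeval_fin_two_apply_self p hlt.ne' htr hdet, le_div_iff₀ (by linarith)] at h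
  simp only [B, of_apply, cons_val', cons_val_one, empty_val', cons_val_fin_one] at h
  linarith

theorem stmt6 (p : Polynomial ℝ) :
    (∀ A : Matrix (Fin 2) (Fin 2) ℝ, (∀ i j, 0 ≤ A i j) →
      ∀ i j, 0 ≤ (Polynomial.aeval A p) i j) ↔
    ((∀ ρ μ : ℝ, |μ| ≤ ρ → |p.eval μ| ≤ p.eval ρ) ∧
     (∀ ρ μ : ℝ, 0 < μ → μ ≤ ρ → 0 ≤ ρ * p.eval (-μ) + μ * p.eval ρ)) :=
  ⟨fun hp => ⟨fun _ _ => PreservesNonnegMatrices.abs_eval_le hp,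
    fun _ _ => PreservesNonnegMatrices.mul_eval_neg_add_mul_eval_nonneg hp⟩,
    fun ⟨h₁, h₂⟩ => preservesNonnegMatrices_two_of_abs_eval_le h₁ h₂⟩
end

section
/- Let p be a polynomial with real coefficients. Then p satisfies p(x) ≥ |p(y)| for all real x, y with x ≥ |y| if and only if both of the following hold: (i) the derivative p′ satisfies p′(x) ≥ 0 for all x ≥ 0; and (ii) p(x) ≥ |p(−x)| for all x ≥ 0. -/
open Polynomial

theorem stmt9 (p : Polynomial ℝ) :
    (∀ x y : ℝ, |y| ≤ x → |p.eval y| ≤ p.eval x) ↔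
    ((∀ x : ℝ, 0 ≤ x → 0 ≤ p.derivative.eval x) ∧
     (∀ x : ℝ, 0 ≤ x → |p.eval (-x)| ≤ p.eval x)) := by
  constructor
  · intro h
    have hmono : MonotoneOn (fun x => p.eval x) (Set.Ici (0 : ℝ)) := by
      intro a ha b hb hab
      have := h b a (by rwa [abs_of_nonneg ha])
      exact le_trans (le_abs_self _) this
    constructor
    · intro x hx
      have hder : HasDerivAt (fun z => p.eval z) (p.derivative.eval x) x :=
        p.hasDerivAt x
      have htend : Filter.Tendsto (slope (fun z => p.eval z) x)
          (nhdsWithin x (Set.Ioi x)) (nhds (p.derivative.eval x)) :=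
        (hasDerivAt_iff_tendsto_slope.mp hder).mono_left
          (nhdsWithin_mono x fun z hz => ne_of_gt hz)
      refine ge_of_tendsto htend ?_
      filter_upwards [self_mem_nhdsWithin] with z hz
      have hz' : x < z := hz
      have hle : p.eval x ≤ p.eval z :=
        hmono (Set.mem_Ici.mpr hx) (Set.mem_Ici.mpr (hx.trans hz'.le)) hz'.le
      have : (0:ℝ) < z - x := sub_pos.mpr hz'
      simp only [slope_def_field, div_nonneg_iff]
      left
      exact ⟨by linarith, by linarith⟩
    · intro x hx
      exact h x (-x) (by rw [abs_neg, abs_of_nonneg hx])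
  · rintro ⟨hd, habs⟩ x y hxy
    have hx0 : 0 ≤ x := le_trans (abs_nonneg y) hxy
    have hmono : MonotoneOn (fun x => p.eval x) (Set.Ici (0 : ℝ)) := by
      apply monotoneOn_of_deriv_nonneg (convex_Ici 0) p.continuousOn
        (p.differentiable.differentiableOn)
      intro z hz
      rw [interior_Ici] at hz
      rw [Polynomial.deriv]
      exact hd z (le_of_lt hz)
    have key : ∀ z : ℝ, 0 ≤ z → z ≤ x → |p.eval z| ≤ p.eval x := by
      intro z hz hzx
      have h1 : |p.eval (-z)| ≤ p.eval z := habs z hz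
      have hpz : 0 ≤ p.eval z := le_trans (abs_nonneg _) h1
      rw [abs_of_nonneg hpz]
      exact hmono hz (Set.mem_Ici.mpr hx0) hzx
    rcases le_or_gt 0 y with hy | hy
    · exact key y hy (by rwa [abs_of_nonneg hy] at hxy)
    · have hxy' : -y ≤ x := by rwa [abs_of_neg hy] at hxy
      have h1 : |p.eval (-(-y))| ≤ p.eval (-y) := habs (-y) (by linarith)
      rw [neg_neg] at h1
      calc |p.eval y| ≤ p.eval (-y) := h1
        _ ≤ |p.eval (-y)| := le_abs_self _
        _ ≤ p.eval x := key (-y) (by linarith) hxy'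
end

section
/- The polynomial p(x) = x⁵ − 2x³ + 2x satisfies p(ρ) ≥ |p(μ)| for all real ρ, μ with ρ ≥ |μ|, but does not satisfy ρ·p(−μ) + μ·p(ρ) ≥ 0 for all real ρ, μ with 0 < μ ≤ ρ (indeed it fails at ρ = 1, μ = 1/2). -/
open Polynomial

lemma mono_aux (a ρ : ℝ) (h0 : 0 ≤ a) (h : a ≤ ρ) :
    a ^ 5 - 2 * a ^ 3 + 2 * a ≤ ρ ^ 5 - 2 * ρ ^ 3 + 2 * ρ := by
  nlinarith [mul_nonneg (sub_nonneg.2 h) (sq_nonneg (ρ ^ 2 + a * ρ - 1)),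
    mul_nonneg (sub_nonneg.2 h) (sq_nonneg (a ^ 2 + a * ρ - 1)),
    mul_nonneg (sub_nonneg.2 h) (sq_nonneg (a ^ 2 - 1)),
    mul_nonneg (sub_nonneg.2 h) (sq_nonneg (ρ ^ 2 - 1)),
    mul_nonneg (sub_nonneg.2 h) (sq_nonneg (a - ρ)),
    mul_nonneg (mul_nonneg h0 (le_trans h0 h)) (sub_nonneg.2 h)]

theorem stmt11 (p : Polynomial ℝ) (hp : p = X ^ 5 - 2 * X ^ 3 + 2 * X) :
    (∀ ρ μ : ℝ, |μ| ≤ ρ → |p.eval μ| ≤ p.eval ρ) ∧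
    ¬ (∀ ρ μ : ℝ, 0 < μ → μ ≤ ρ → 0 ≤ ρ * p.eval (-μ) + μ * p.eval ρ) ∧
    (1 : ℝ) * p.eval (-(1 / 2)) + (1 / 2) * p.eval 1 < 0 := by
  subst hp
  refine ⟨?_, ?_, ?_⟩
  · intro ρ μ h
    simp only [eval_add, eval_sub, eval_mul, eval_pow, eval_X, eval_ofNat] at *
    have habs : |μ| ^ 5 - 2 * |μ| ^ 3 + 2 * |μ| ≤ ρ ^ 5 - 2 * ρ ^ 3 + 2 * ρ :=
      mono_aux |μ| ρ (abs_nonneg μ) h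
    have hμ : |μ ^ 5 - 2 * μ ^ 3 + 2 * μ| = |μ| ^ 5 - 2 * |μ| ^ 3 + 2 * |μ| := by
      have h1 : μ ^ 5 - 2 * μ ^ 3 + 2 * μ = μ * ((μ ^ 2 - 1) ^ 2 + 1) := by ring
      have h2 : (0:ℝ) < (μ ^ 2 - 1) ^ 2 + 1 := by positivity
      have h3 : |μ| ^ 5 - 2 * |μ| ^ 3 + 2 * |μ| = |μ| * ((μ ^ 2 - 1) ^ 2 + 1) := by
        rw [← sq_abs μ]; ring
      rw [h1, abs_mul, abs_of_pos h2, h3]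
    linarith [hμ ▸ habs]
  · intro h
    have := h 1 (1/2) (by norm_num) (by norm_num)
    simp only [eval_add, eval_sub, eval_mul, eval_pow, eval_X, eval_ofNat] at this
    norm_num at this
  · simp only [eval_add, eval_sub, eval_mul, eval_pow, eval_X, eval_ofNat]
    norm_num
end

section
/- The polynomial p(x) = x⁴ − x² + x + 1 belongs to 𝒫₂, i.e., for every entrywise nonnegative 2-by-2 real matrix A, the matrix p(A) is entrywise nonnegative. -/
open Polynomial Matrix

lemma stmt15aux (a d e : ℝ) (ha : 0 ≤ a) (hd : 0 ≤ d) (he : 0 ≤ e) :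
    0 ≤ (a + d) * (a ^ 2 + 2 * e + d ^ 2) - (a + d) + 1 := by
  nlinarith [mul_nonneg (add_nonneg ha hd) (sq_nonneg (a + d - 1)),
    sq_nonneg (a + d - 1), sq_nonneg (a + d - 1/2),
    mul_nonneg (add_nonneg ha hd) (sq_nonneg (a - d)),
    mul_nonneg (add_nonneg ha hd) he]

theorem stmt15 (p : Polynomial ℝ) (hp : p = X ^ 4 - X ^ 2 + X + 1) :
    ∀ A : Matrix (Fin 2) (Fin 2) ℝ, (∀ i j, 0 ≤ A i j) →
      ∀ i j, 0 ≤ (Polynomial.aeval A p) i j := by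
  subst hp
  intro A hA i j
  have ha := hA 0 0
  have hb := hA 0 1
  have hc := hA 1 0
  have hd := hA 1 1
  have hbc := mul_nonneg hb hc
  have h1 := mul_nonneg hb (stmt15aux (A 0 0) (A 1 1) (A 0 1 * A 1 0) ha hd hbc)
  have h2 := mul_nonneg hc (stmt15aux (A 0 0) (A 1 1) (A 0 1 * A 1 0) ha hd hbc)
  simp only [map_add, map_sub, map_pow, aeval_X, Polynomial.aeval_one]
  fin_cases i <;> fin_cases j <;>
    simp only [Matrix.sub_apply, Matrix.add_apply, Matrix.one_apply, pow_succ, pow_zero,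
      Matrix.one_mul, Matrix.mul_apply, Fin.sum_univ_two, Fin.isValue] <;>
    norm_num <;>
    nlinarith [sq_nonneg (A 0 0 * A 0 0 + A 0 1 * A 1 0 - 1), sq_nonneg (A 1 1 * A 1 1 + A 0 1 * A 1 0 - 1),
      mul_nonneg ha hd, hbc, h1, h2, mul_nonneg hbc hbc]
end

section
/- The inclusion 𝒫₃ ⊆ 𝒫₂ is strict: every polynomial in 𝒫₃ belongs to 𝒫₂, and there exists a polynomial (namely p(x) = x⁴ − x² + x + 1) that belongs to 𝒫₂ but not to 𝒫₃. -/
open Polynomial Matrix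


-- scalar lemmas
lemma alpha_nonneg (a b c d : ℝ) (ha : 0 ≤ a) (hb : 0 ≤ b) (hc : 0 ≤ c) (hd : 0 ≤ d) :
    0 ≤ (a+d)^3 - 2*(a+d) * (a*d - b*c) - (a+d) + 1 := by
  nlinarith [sq_nonneg (a-d), sq_nonneg (a+d-1), mul_nonneg hb hc,
    mul_nonneg (add_nonneg ha hd) (mul_nonneg hb hc),
    mul_nonneg (add_nonneg ha hd) (sq_nonneg (a+d-1)), sq_nonneg (a+d),
    mul_nonneg (add_nonneg ha hd) (sq_nonneg (a-d))]

lemma diag_nonneg (a b c d : ℝ) (ha : 0 ≤ a) (hb : 0 ≤ b) (hc : 0 ≤ c) (hd : 0 ≤ d) :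
    0 ≤ a*((a+d)^3 - 2*(a+d) * (a*d - b*c) - (a+d) + 1)
      + ((a*d-b*c)^2 - (a+d)^2*(a*d-b*c) + (a*d-b*c) + 1) := by
  nlinarith [sq_nonneg (b*c - 1/2), sq_nonneg (a*a - 1/2), mul_nonneg hb hc,
    mul_nonneg (mul_nonneg ha ha) (mul_nonneg hb hc),
    mul_nonneg (sq_nonneg (a+d)) (mul_nonneg hb hc)]

-- 2x2 membership
lemma part2 (A : Matrix (Fin 2) (Fin 2) ℝ) (hA : ∀ i j, 0 ≤ A i j) (i j : Fin 2) :
    0 ≤ (Polynomial.aeval A ((X : Polynomial ℝ) ^ 4 - X ^ 2 + X + 1)) i j := by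
  have e : (Polynomial.aeval A ((X : Polynomial ℝ) ^ 4 - X ^ 2 + X + 1))
      = A^4 - A^2 + A + 1 := by
    simp [map_add, map_sub, map_pow]
  rw [e]
  obtain ⟨a, b, c, d, rfl⟩ : ∃ a b c d, A = !![a, b; c, d] :=
    ⟨A 0 0, A 0 1, A 1 0, A 1 1, Matrix.eta_fin_two A⟩
  have ha : 0 ≤ a := by simpa using hA 0 0
  have hb : 0 ≤ b := by simpa using hA 0 1
  have hc : 0 ≤ c := by simpa using hA 1 0
  have hd : 0 ≤ d := by simpa using hA 1 1
  have h2 : !![a, b; c, d] ^2 = !![a*a+b*c, a*b+b*d; c*a+d*c, c*b+d*d] := by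
    rw [pow_two, Matrix.mul_fin_two]
  have h4 : !![a, b; c, d] ^ 4 = (!![a, b; c, d] ^ 2) * (!![a, b; c, d] ^ 2) := by rw [show (4:ℕ) = 2+2 from rfl, pow_add]
  rw [h4, h2, Matrix.mul_fin_two]
  have hal := alpha_nonneg a b c d ha hb hc hd
  have hdg := diag_nonneg a b c d ha hb hc hd
  have hdg' := diag_nonneg d c b a hd hc hb ha
  fin_cases i <;> fin_cases j <;>
    simp [Matrix.sub_apply, Matrix.add_apply, Matrix.one_apply] <;>
    nlinarith [mul_nonneg hb hal, mul_nonneg hc hal, hdg, hdg']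


noncomputable def blockEmbed :
    (Matrix (Fin 2) (Fin 2) ℝ × Matrix (Fin 1) (Fin 1) ℝ) →ₐ[ℝ]
      Matrix (Fin 2 ⊕ Fin 1) (Fin 2 ⊕ Fin 1) ℝ where
  toFun x := Matrix.fromBlocks x.1 0 0 x.2
  map_one' := Matrix.fromBlocks_one
  map_mul' x y := by simp [Matrix.fromBlocks_multiply]
  map_zero' := by simp [Matrix.fromBlocks_zero]
  map_add' x y := by simp [Matrix.fromBlocks_add]
  commutes' r := by
    show Matrix.fromBlocks ((algebraMap ℝ (Matrix (Fin 2) (Fin 2) ℝ)) r) 0 0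
      ((algebraMap ℝ (Matrix (Fin 1) (Fin 1) ℝ)) r) = _
    simp only [Matrix.algebraMap_eq_diagonal, Matrix.fromBlocks_diagonal]
    funext x
    cases x <;> rfl

lemma part1 (p : Polynomial ℝ)
    (hp : ∀ A : Matrix (Fin 3) (Fin 3) ℝ, (∀ i j, 0 ≤ A i j) →
        ∀ i j, 0 ≤ (Polynomial.aeval A p) i j)
    (A : Matrix (Fin 2) (Fin 2) ℝ) (hA : ∀ i j, 0 ≤ A i j) (i j : Fin 2) :
    0 ≤ (Polynomial.aeval A p) i j := by
  classical
  set Φ : (Matrix (Fin 2) (Fin 2) ℝ × Matrix (Fin 1) (Fin 1) ℝ) →ₐ[ℝ]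
      Matrix (Fin 3) (Fin 3) ℝ :=
    ((Matrix.reindexAlgEquiv ℝ ℝ (finSumFinEquiv : Fin 2 ⊕ Fin 1 ≃ Fin 3)).toAlgHom).comp
      blockEmbed with hΦ
  set B : Matrix (Fin 3) (Fin 3) ℝ := Φ (A, 1) with hB
  have hBnn : ∀ i' j', 0 ≤ B i' j' := by
    intro i' j'
    have : B i' j' = Matrix.fromBlocks A 0 0 (1 : Matrix (Fin 1) (Fin 1) ℝ)
        ((finSumFinEquiv : Fin 2 ⊕ Fin 1 ≃ Fin 3).symm i') ((finSumFinEquiv : Fin 2 ⊕ Fin 1 ≃ Fin 3).symm j') := by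
      simp [hB, hΦ, blockEmbed, Matrix.reindexAlgEquiv_apply, Matrix.reindex_apply,
        Matrix.submatrix_apply]
    rw [this]
    rcases (finSumFinEquiv : Fin 2 ⊕ Fin 1 ≃ Fin 3).symm i' with i₁ | i₁ <;> rcases (finSumFinEquiv : Fin 2 ⊕ Fin 1 ≃ Fin 3).symm j' with j₁ | j₁ <;>
      simp [Matrix.fromBlocks, Matrix.one_apply] <;> first | exact hA _ _ | positivity
  have key : Polynomial.aeval B p = Φ (Polynomial.aeval (A, (1 : Matrix (Fin 1) (Fin 1) ℝ)) p) :=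
    Polynomial.aeval_algHom_apply Φ (A, 1) p
  have hfst : (Polynomial.aeval (A, (1 : Matrix (Fin 1) (Fin 1) ℝ)) p).1
      = Polynomial.aeval A p :=
    (Polynomial.aeval_algHom_apply (AlgHom.fst ℝ _ _) (A, 1) p).symm
  have := hp B hBnn ((finSumFinEquiv : Fin 2 ⊕ Fin 1 ≃ Fin 3) (Sum.inl i)) ((finSumFinEquiv : Fin 2 ⊕ Fin 1 ≃ Fin 3) (Sum.inl j))
  rw [key] at this
  have e2 : Φ (Polynomial.aeval (A, (1 : Matrix (Fin 1) (Fin 1) ℝ)) p)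
        ((finSumFinEquiv : Fin 2 ⊕ Fin 1 ≃ Fin 3) (Sum.inl i)) ((finSumFinEquiv : Fin 2 ⊕ Fin 1 ≃ Fin 3) (Sum.inl j))
      = (Polynomial.aeval A p) i j := by
    rw [← hfst]
    simp [hΦ, blockEmbed, Matrix.reindexAlgEquiv_apply, Matrix.reindex_apply,
      Matrix.submatrix_apply]
  rwa [e2] at this

lemma part3 :
    ¬ (∀ A : Matrix (Fin 3) (Fin 3) ℝ, (∀ i j, 0 ≤ A i j) →
        ∀ i j, 0 ≤ (Polynomial.aeval A ((X : Polynomial ℝ) ^ 4 - X ^ 2 + X + 1)) i j) := by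
  intro h
  set C : Matrix (Fin 3) (Fin 3) ℝ := !![0,0,1;1,0,0;0,1,0] with hC
  have hnn : ∀ i j, 0 ≤ C i j := by
    intro i j; fin_cases i <;> fin_cases j <;> norm_num [hC]
  have h2 : C ^ 2 = !![0,1,0;0,0,1;1,0,0] := by
    rw [pow_two, hC, Matrix.mul_fin_three]; norm_num
  have h4 : C ^ 4 = C := by
    rw [show (4:ℕ) = 2+2 from rfl, pow_add, h2, Matrix.mul_fin_three]
    rw [hC]; norm_num
  have e : (Polynomial.aeval C ((X : Polynomial ℝ) ^ 4 - X ^ 2 + X + 1))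
      = C ^ 4 - C ^ 2 + C + 1 := by simp [map_add, map_sub, map_pow]
  have := h C hnn 0 1
  rw [e, h4, h2] at this
  simp [hC, Matrix.sub_apply, Matrix.add_apply, Matrix.one_apply] at this
  linarith

theorem stmt16 :
    (∀ p : Polynomial ℝ,
      (∀ A : Matrix (Fin 3) (Fin 3) ℝ, (∀ i j, 0 ≤ A i j) →
        ∀ i j, 0 ≤ (Polynomial.aeval A p) i j) →
      (∀ A : Matrix (Fin 2) (Fin 2) ℝ, (∀ i j, 0 ≤ A i j) →
        ∀ i j, 0 ≤ (Polynomial.aeval A p) i j)) ∧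
    (∀ A : Matrix (Fin 2) (Fin 2) ℝ, (∀ i j, 0 ≤ A i j) →
      ∀ i j, 0 ≤ (Polynomial.aeval A ((X : Polynomial ℝ) ^ 4 - X ^ 2 + X + 1)) i j) ∧
    ¬ (∀ A : Matrix (Fin 3) (Fin 3) ℝ, (∀ i j, 0 ≤ A i j) →
        ∀ i j, 0 ≤ (Polynomial.aeval A ((X : Polynomial ℝ) ^ 4 - X ^ 2 + X + 1)) i j) := by
  exact ⟨part1, part2, part3⟩
end

section
/- The polynomial p(x) = x⁴ − x² + x + 1 does not belong to 𝒫₃, i.e., there exists an entrywise nonnegative 3-by-3 real matrix A such that p(A) has a negative entry. -/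
open Polynomial Matrix

theorem stmt17 (p : Polynomial ℝ) (hp : p = X ^ 4 - X ^ 2 + X + 1) :
    ∃ A : Matrix (Fin 3) (Fin 3) ℝ, (∀ i j, 0 ≤ A i j) ∧
      ∃ i j, (Polynomial.aeval A p) i j < 0 := by
  refine ⟨!![0,2,0;0,0,0;2,0,0], ?_, 2, 1, ?_⟩
  · intro i j; fin_cases i <;> fin_cases j <;> norm_num
  · subst hp
    simp only [map_add, map_sub, map_pow, aeval_X, _root_.map_one]
    have h2 : (!![0,2,0;0,0,0;2,0,0] : Matrix (Fin 3) (Fin 3) ℝ) ^ 2 =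
        !![0,0,0;0,0,0;0,4,0] := by
      rw [pow_two]
      ext i j
      fin_cases i <;> fin_cases j <;>
        (simp [Matrix.mul_apply, Fin.sum_univ_three, Matrix.vecHead, Matrix.vecTail]; try norm_num)
    have h4 : (!![0,2,0;0,0,0;2,0,0] : Matrix (Fin 3) (Fin 3) ℝ) ^ 4 =
        !![0,0,0;0,0,0;0,0,0] := by
      rw [show (4:ℕ) = 2 + 2 by rfl, pow_add, h2]
      ext i j
      fin_cases i <;> fin_cases j <;>
        (simp [Matrix.mul_apply, Fin.sum_univ_three, Matrix.vecHead, Matrix.vecTail]; try norm_num)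
    rw [h2, h4]
    simp [Matrix.add_apply, Matrix.sub_apply, Matrix.one_apply]
end

section
/- Let p be a polynomial with real coefficients. Then p(A) is entrywise nonnegative for every entrywise nonnegative 2-by-2 real matrix A of the form [[a, b], [b, a]] (with a, b ≥ 0) if and only if all of the following hold: (i) the derivative p′ satisfies p′(x) ≥ 0 for all x ≥ 0; (ii) the even part p_e satisfies p_e(x) ≥ 0 for all x ≥ 0; and (iii) the odd part p_o satisfies p_o(x) ≥ 0 for all x ≥ 0. -/
open Polynomial Matrix

lemma circ_pow (a b : ℝ) (n : ℕ) :
    (!![a, b; b, a] : Matrix (Fin 2) (Fin 2) ℝ) ^ n =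
      !![((a+b)^n + (a-b)^n)/2, ((a+b)^n - (a-b)^n)/2;
         ((a+b)^n - (a-b)^n)/2, ((a+b)^n + (a-b)^n)/2] := by
  induction n with
  | zero =>
    ext i j
    fin_cases i <;> fin_cases j <;> norm_num [Matrix.one_apply]
  | succ n ih =>
    rw [pow_succ, ih]
    ext i j
    fin_cases i <;> fin_cases j <;>
      simp [Matrix.mul_apply, Fin.sum_univ_two, pow_succ] <;> ring

lemma circ_aeval (a b : ℝ) (p : Polynomial ℝ) :
    (aeval (!![a, b; b, a] : Matrix (Fin 2) (Fin 2) ℝ) p) =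
      !![(p.eval (a+b) + p.eval (a-b))/2, (p.eval (a+b) - p.eval (a-b))/2;
         (p.eval (a+b) - p.eval (a-b))/2, (p.eval (a+b) + p.eval (a-b))/2] := by
  induction p using Polynomial.induction_on' with
  | add p q hp hq =>
    rw [map_add, hp, hq]
    ext i j
    fin_cases i <;> fin_cases j <;> simp <;> ring
  | monomial n c =>
    rw [aeval_monomial, ← Algebra.smul_def, circ_pow]
    ext i j
    fin_cases i <;> fin_cases j <;> simp [eval_monomial] <;> ring

theorem stmt18 (p : Polynomial ℝ) :
    (∀ a b : ℝ, 0 ≤ a → 0 ≤ b →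
      ∀ i j, 0 ≤ (Polynomial.aeval (!![a, b; b, a] : Matrix (Fin 2) (Fin 2) ℝ) p) i j) ↔
    ((∀ x : ℝ, 0 ≤ x → 0 ≤ p.derivative.eval x) ∧
     (∀ x : ℝ, 0 ≤ x → 0 ≤ (p.eval x + p.eval (-x)) / 2) ∧
     (∀ x : ℝ, 0 ≤ x → 0 ≤ (p.eval x - p.eval (-x)) / 2)) := by
  constructor
  · intro H
    -- extract the two entry inequalities
    have key : ∀ a b : ℝ, 0 ≤ a → 0 ≤ b →
        0 ≤ (p.eval (a+b) + p.eval (a-b)) / 2 ∧ 0 ≤ (p.eval (a+b) - p.eval (a-b)) / 2 := by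
      intro a b ha hb
      have h00 := H a b ha hb 0 0
      have h01 := H a b ha hb 0 1
      rw [circ_aeval] at h00 h01
      simp at h00 h01
      constructor <;> linarith
    have mono : ∀ x y : ℝ, 0 ≤ x → x ≤ y → p.eval x ≤ p.eval y := by
      intro x y hx hxy
      have := (key ((y+x)/2) ((y-x)/2) (by linarith) (by linarith)).2
      have e1 : (y+x)/2 + (y-x)/2 = y := by ring
      have e2 : (y+x)/2 - (y-x)/2 = x := by ring
      rw [e1, e2] at this
      linarith
    refine ⟨?_, ?_, ?_⟩
    · intro x hx
      have hd : HasDerivWithinAt (fun y => p.eval y) (p.derivative.eval x) (Set.Ioi x) x :=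
        (p.hasDerivAt x).hasDerivWithinAt
      rw [hasDerivWithinAt_iff_tendsto_slope] at hd
      have hne : (Set.Ioi x \ {x}) = Set.Ioi x := by simp
      rw [hne] at hd
      refine ge_of_tendsto hd ?_
      filter_upwards [self_mem_nhdsWithin] with y hy
      have hy' : x < y := hy
      rw [slope_def_field]
      exact div_nonneg (by linarith [mono x y hx hy'.le]) (by linarith)
    · intro x hx
      have := (key 0 x le_rfl hx).1
      simpa using this
    · intro x hx
      have := (key 0 x le_rfl hx).2
      simpa using this
  · rintro ⟨h1, h2, h3⟩ a b ha hb i j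
    have mono : MonotoneOn (fun x => p.eval x) (Set.Ici 0) := by
      apply monotoneOn_of_deriv_nonneg (convex_Ici 0) (p.continuousOn)
        (fun x _ => (p.differentiable.differentiableAt).differentiableWithinAt)
      intro x hx
      rw [interior_Ici] at hx
      rw [Polynomial.deriv]
      exact h1 x hx.le
    -- the two needed inequalities
    have hsum : 0 ≤ p.eval (a+b) + p.eval (a-b) := by
      rcases le_total b a with hba | hab
      · have hd : (0:ℝ) ≤ a - b := by linarith
        have e1 := h2 (a-b) hd
        have e2 := h3 (a-b) hd
        have e3 := h2 (a+b) (by linarith)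
        have e4 := h3 (a+b) (by linarith)
        linarith
      · have hd : (0:ℝ) ≤ b - a := by linarith
        have e1 := h2 (b-a) hd
        have hm := mono (Set.mem_Ici.2 hd) (Set.mem_Ici.2 (by linarith : (0:ℝ) ≤ a+b))
          (by linarith : b - a ≤ a + b)
        have e : a - b = -(b-a) := by ring
        rw [e]
        simp only at hm
        linarith
    have hdiff : 0 ≤ p.eval (a+b) - p.eval (a-b) := by
      rcases le_total b a with hba | hab
      · have hd : (0:ℝ) ≤ a - b := by linarith
        have hm := mono (Set.mem_Ici.2 hd) (Set.mem_Ici.2 (by linarith : (0:ℝ) ≤ a+b))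
          (by linarith : a - b ≤ a + b)
        simp only at hm
        linarith
      · have hd : (0:ℝ) ≤ b - a := by linarith
        have e2 := h3 (b-a) hd
        have hm := mono (Set.mem_Ici.2 hd) (Set.mem_Ici.2 (by linarith : (0:ℝ) ≤ a+b))
          (by linarith : b - a ≤ a + b)
        have e : a - b = -(b-a) := by ring
        rw [e]
        simp only at hm
        linarith
    rw [circ_aeval]
    fin_cases i <;> fin_cases j <;> simp <;> linarith
end
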